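/- A composition is a palindrome if and only if all factors in its unique irreducible factorization are palindromes. -/

import Mathlib

/-- A composition: a nonempty list of positive integers. -/
def IsComposition (l : List ℕ) : Prop := l ≠ [] ∧ ∀ x ∈ l, 0 < x

/-- `Coarsens α β` : α is a coarsening of β, i.e. α is obtained from β by
summing blocks of consecutive components. -/
def Coarsens (α β : List ℕ) : Prop :=
  ∃ P : List (List ℕ), P.flatten = β ∧ (∀ p ∈ P, p ≠ []) ∧ α = P.map List.sum

/-- All ways of splitting a list into blocks of consecutive elements. -/
def splits : List ℕ → List (List (List ℕ))
  | [] => [[]]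
  | a :: rest =>
    (splits rest).flatMap fun s =>
      match s with
      | [] => [[[a]]]
      | b :: bs => [(a :: b) :: bs, [a] :: b :: bs]

/-- The list of all coarsenings of a composition. -/
def coarsenings (β : List ℕ) : List (List ℕ) :=
  (splits β).map (fun P => P.map List.sum)

/-- The L-polynomial of a composition, encoded as the multiset of monomials
`x_{λ(α)}` over coarsenings `α` of `β`; each monomial is recorded as the
multiset (partition) of the components of `α`. -/
def Lpoly (β : List ℕ) : Multiset (Multiset ℕ) :=
  ((coarsenings β).map fun α => (α : Multiset ℕ) : List (Multiset ℕ))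

/-- Near-concatenation of compositions. -/
def odot : List ℕ → List ℕ → List ℕ
  | [], β => β
  | [a], [] => [a]
  | [a], b :: bs => (a + b) :: bs
  | a :: b :: as, β => a :: odot (b :: as) β

/-- `odotPow α i` is the `i`-fold near-concatenation `α^{⊙i}`. -/
def odotPow (α : List ℕ) : ℕ → List ℕ
  | 0 => []
  | n + 1 => odot (odotPow α n) α

/-- The composition product `β ∘ α = α^{⊙β₁} · α^{⊙β₂} ⋯ α^{⊙β_k}`. -/
def circ (β α : List ℕ) : List ℕ :=
  (β.map (odotPow α)).flatten

/-- A trivial factorization `β ∘ γ`. -/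
def TrivialFact (β γ : List ℕ) : Prop :=
  β = [1] ∨ γ = [1] ∨ (β.length = 1 ∧ γ.length = 1) ∨
    ((∀ b ∈ β, b = 1) ∧ (∀ c ∈ γ, c = 1))

/-- A composition admitting only trivial factorizations. -/
def IrredComp (f : List ℕ) : Prop :=
  ∀ β γ : List ℕ, IsComposition β → IsComposition γ → f = circ β γ → TrivialFact β γ

/-- Product of a list of compositions under `∘` (with identity `[1]`). -/
def circList : List (List ℕ) → List ℕ
  | [] => [1]
  | f :: fs => circ f (circList fs)

/-- `fs` is an irreducible factorization of `α`:
all factors are irreducible compositions, and no consecutive product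
`α_i ∘ α_{i+1}` is a trivial factorization. -/
def IsIrredFactorization (α : List ℕ) (fs : List (List ℕ)) : Prop :=
  fs ≠ [] ∧ (∀ f ∈ fs, IsComposition f ∧ IrredComp f) ∧
    fs.Chain' (fun a b => ¬ TrivialFact a b) ∧ α = circList fs

/-- `N(γ) = |γ| - ℓ(γ)`. -/
def Nstat (γ : List ℕ) : ℕ := γ.sum - γ.length

/-!
Reversal commutes with `∘`, and `∘` can be cancelled: if `f ∘ B = g ∘ C` with `ℓ(B) = ℓ(C)` and
`|B| = |C|`, then `B = C`, because all parts of `B` but the last form a prefix of `f ∘ B` and the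
last part is fixed by `|B|`; then `f = g`, by comparing the leading blocks `B^{⊙f₁}` and
`B^{⊙g₁}`. So if `α₁ ∘ (α₂ ∘ ⋯ ∘ αₖ)` is a palindrome, it also equals
`α₁ʳ ∘ (α₂ ∘ ⋯ ∘ αₖ)ʳ`, and the factors can be peeled off one at a time as palindromes.

Conversely, a product of palindromes is a palindrome, so it remains to show that every
composition has an irreducible factorization. Induction on `|β|` writes `β` as a product of
irreducibles. If two adjacent factors form a trivial factorization, their product is again
irreducible (it is one of the factors, a one-part composition, or a composition of ones), so
merging them gives a factorization with fewer factors.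
-/

lemma odot_nil_right : ∀ X : List ℕ, odot X [] = X
  | [] | [_] => rfl
  | a :: b :: as => congrArg (a :: ·) (odot_nil_right (b :: as))

lemma odot_cons_of_ne_nil (a : ℕ) {X : List ℕ} (hX : X ≠ []) (Y : List ℕ) :
    odot (a :: X) Y = a :: odot X Y := by
  cases X with
  | nil => exact absurd rfl hX
  | cons => rfl

lemma odot_eq : ∀ (X Y : List ℕ) (hX : X ≠ []) (hY : Y ≠ []),
    odot X Y = X.dropLast ++ (X.getLast hX + Y.head hY) :: Y.tail
  | [_], _ :: _, _, _ => rfl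
  | a :: b :: as, Y, _, hY => by
    rw [odot_cons_of_ne_nil a (List.cons_ne_nil b as),
      odot_eq (b :: as) Y (List.cons_ne_nil b as) hY]
    simp [List.getLast_cons]

lemma odot_ne_nil : ∀ (X : List ℕ) {Y : List ℕ}, Y ≠ [] → odot X Y ≠ []
  | [], _, hY => hY
  | [_], _ :: _, _ => List.cons_ne_nil _ _
  | _ :: _ :: _, _, _ => List.cons_ne_nil _ _

lemma odot_assoc : ∀ X Y Z : List ℕ, odot (odot X Y) Z = odot X (odot Y Z)
  | [], _, _ => rfl
  | [a], [], Z => by rw [odot_nil_right]; rfl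
  | [a], [y], [] => rfl
  | [a], [y], z :: zs => by simp [odot, Nat.add_assoc]
  | [a], y :: w :: ws, Z => rfl
  | a :: b :: as, [], Z => by rw [odot_nil_right]; rfl
  | a :: b :: as, y :: ys, Z => by
    have hY : y :: ys ≠ [] := List.cons_ne_nil y ys
    rw [odot_cons_of_ne_nil a (List.cons_ne_nil b as),
      odot_cons_of_ne_nil a (odot_ne_nil (b :: as) hY), odot_assoc (b :: as) (y :: ys) Z]
    rfl

lemma sum_odot (X Y : List ℕ) : (odot X Y).sum = X.sum + Y.sum := by
  rcases eq_or_ne X [] with rfl | hX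
  · simp [odot]
  rcases eq_or_ne Y [] with rfl | hY
  · simp [odot_nil_right]
  conv_rhs => rw [← List.dropLast_append_getLast hX, ← List.cons_head_tail hY]
  simp only [odot_eq X Y hX hY, List.sum_append, List.sum_cons, List.sum_nil]
  ring

lemma pos_of_mem_odot {X Y : List ℕ} (hX : ∀ x ∈ X, 0 < x) (hY : ∀ y ∈ Y, 0 < y) :
    ∀ z ∈ odot X Y, 0 < z := by
  rcases eq_or_ne X [] with rfl | hXn
  · exact hY
  rcases eq_or_ne Y [] with rfl | hYn
  · rwa [odot_nil_right]
  intro z hz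
  rw [odot_eq X Y hXn hYn] at hz
  rcases List.mem_append.1 hz with h | h
  · exact hX z (List.dropLast_subset X h)
  rcases List.mem_cons.1 h with rfl | h
  · exact Nat.add_pos_left (hX _ (List.getLast_mem hXn)) _
  · exact hY z (List.mem_of_mem_tail h)

lemma length_odot {X Y : List ℕ} (hX : X ≠ []) (hY : Y ≠ []) :
    (odot X Y).length + 1 = X.length + Y.length := by
  have := List.length_pos_iff.2 hX
  have := List.length_pos_iff.2 hY
  simp only [odot_eq X Y hX hY, List.length_append, List.length_dropLast, List.length_cons,
    List.length_tail]
  omega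

lemma reverse_odot (X Y : List ℕ) : (odot X Y).reverse = odot Y.reverse X.reverse := by
  rcases eq_or_ne X [] with rfl | hX
  · simp [odot, odot_nil_right]
  rcases eq_or_ne Y [] with rfl | hY
  · simp [odot, odot_nil_right]
  rw [odot_eq X Y hX hY, odot_eq _ _ (List.reverse_ne_nil_iff.2 hY) (List.reverse_ne_nil_iff.2 hX)]
  simp [List.head_reverse, List.getLast_reverse, List.tail_reverse, List.dropLast_reverse,
    Nat.add_comm]

lemma dropLast_prefix_odot (X Y : List ℕ) : X.dropLast <+: odot X Y := by
  rcases eq_or_ne X [] with rfl | hX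
  · exact List.nil_prefix
  rcases eq_or_ne Y [] with rfl | hY
  · rw [odot_nil_right]; exact List.dropLast_prefix X
  rw [odot_eq X Y hX hY]
  exact List.prefix_append _ _

lemma odot_append_left (X : List ℕ) {Y : List ℕ} (hY : Y ≠ []) (Z : List ℕ) :
    odot (X ++ Y) Z = X ++ odot Y Z := by
  induction X with
  | nil => rfl
  | cons a X ih =>
    rw [List.cons_append, odot_cons_of_ne_nil a (by simp [hY]), ih, List.cons_append]

lemma odot_append_right (X : List ℕ) {Y : List ℕ} (hY : Y ≠ []) (Z : List ℕ) :
    odot X (Y ++ Z) = odot X Y ++ Z := by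
  rcases eq_or_ne X [] with rfl | hX
  · rfl
  rw [odot_eq X _ hX (by simp [hY]), odot_eq X Y hX hY, List.head_append_of_ne_nil hY,
    List.tail_append_of_ne_nil hY]
  simp

section odotPow

variable (B : List ℕ)

lemma odotPow_add (i : ℕ) : ∀ j, odotPow B (i + j) = odot (odotPow B i) (odotPow B j)
  | 0 => (odot_nil_right _).symm
  | j + 1 => by
    show odot (odotPow B (i + j)) B = odot (odotPow B i) (odot (odotPow B j) B)
    rw [odotPow_add i j, odot_assoc]

lemma odotPow_succ' (n : ℕ) : odotPow B (n + 1) = odot B (odotPow B n) := by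
  rw [Nat.add_comm, odotPow_add]
  rfl

lemma sum_odotPow (n : ℕ) : (odotPow B n).sum = n * B.sum := by
  induction n with
  | zero => simp [odotPow]
  | succ n ih =>
    rw [odotPow, sum_odot, ih]
    ring

lemma reverse_odotPow (n : ℕ) : (odotPow B n).reverse = odotPow B.reverse n := by
  induction n with
  | zero => rfl
  | succ n ih => rw [odotPow, reverse_odot, ih, ← odotPow_succ']

lemma dropLast_prefix_odotPow {n : ℕ} (hn : 0 < n) : B.dropLast <+: odotPow B n := by
  obtain ⟨m, rfl⟩ := Nat.exists_eq_add_of_lt hn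
  rw [Nat.zero_add, odotPow_succ']
  exact dropLast_prefix_odot B _

variable {B}

lemma odotPow_ne_nil (hB : B ≠ []) {n : ℕ} (hn : 0 < n) : odotPow B n ≠ [] := by
  obtain ⟨m, rfl⟩ := Nat.exists_eq_add_of_lt hn
  exact odot_ne_nil _ hB

lemma pos_of_mem_odotPow (hB : ∀ x ∈ B, 0 < x) (n : ℕ) : ∀ x ∈ odotPow B n, 0 < x := by
  induction n with
  | zero => simp [odotPow]
  | succ n ih => exact pos_of_mem_odot ih hB

lemma length_odotPow (hB : B ≠ []) {n : ℕ} (hn : 0 < n) :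
    (odotPow B n).length + n = n * B.length + 1 := by
  induction n with
  | zero => omega
  | succ n ih =>
    rcases Nat.eq_zero_or_pos n with rfl | hn'
    · simp [odotPow, odot]
    · have := length_odot (odotPow_ne_nil hB hn') hB
      have := ih hn'
      rw [odotPow, Nat.succ_mul]
      omega

lemma odotPow_singleton (x : ℕ) {n : ℕ} (hn : 0 < n) : odotPow [x] n = [n * x] := by
  induction n with
  | zero => omega
  | succ n ih =>
    rcases Nat.eq_zero_or_pos n with rfl | hn'
    · simp [odotPow, odot]
    · rw [odotPow, ih hn', Nat.succ_mul]
      rfl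

end odotPow

@[simp]
lemma circ_nil (B : List ℕ) : circ [] B = [] := rfl

@[simp]
lemma circ_cons (b : ℕ) (f B : List ℕ) : circ (b :: f) B = odotPow B b ++ circ f B := rfl

lemma circ_append (f g B : List ℕ) : circ (f ++ g) B = circ f B ++ circ g B := by
  simp [circ]

lemma circ_one_left (B : List ℕ) : circ [1] B = B := by
  simp [odotPow, odot]

lemma circ_one_right {f : List ℕ} (hf : ∀ x ∈ f, 0 < x) : circ f [1] = f := by
  induction f with
  | nil => rfl
  | cons b f ih =>
    rw [circ_cons, odotPow_singleton 1 (hf b (by simp)), ih (fun x hx => hf x (by simp [hx]))]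
    simp

lemma sum_circ (f B : List ℕ) : (circ f B).sum = f.sum * B.sum := by
  induction f with
  | nil => simp
  | cons b f ih =>
    rw [circ_cons, List.sum_append, sum_odotPow, ih, List.sum_cons]
    ring

-- `ℓ(f ∘ B) = |f| (ℓ(B) - 1) + ℓ(f)`, written without truncated subtraction
lemma length_circ {f B : List ℕ} (hf : ∀ x ∈ f, 0 < x) (hB : B ≠ []) :
    (circ f B).length + f.sum = f.sum * B.length + f.length := by
  induction f with
  | nil => simp
  | cons b f ih =>
    have := length_odotPow hB (hf b (by simp))
    have := ih (fun x hx => hf x (by simp [hx]))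
    simp only [circ_cons, List.length_append, List.sum_cons, List.length_cons]
    rw [Nat.add_mul]
    omega

lemma pos_of_mem_circ {f B : List ℕ} (hB : ∀ x ∈ B, 0 < x) : ∀ x ∈ circ f B, 0 < x := by
  simp only [circ, List.mem_flatten, List.mem_map]
  rintro x ⟨_, ⟨b, -, rfl⟩, hx⟩
  exact pos_of_mem_odotPow hB b x hx

lemma IsComposition.circ {f B : List ℕ} (hf : IsComposition f) (hB : IsComposition B) :
    IsComposition (circ f B) := by
  refine ⟨?_, pos_of_mem_circ hB.2⟩
  obtain ⟨b, f, rfl⟩ := List.exists_cons_of_ne_nil hf.1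
  simp [odotPow_ne_nil hB.1 (hf.2 b (by simp))]

lemma reverse_circ (f B : List ℕ) : (circ f B).reverse = circ f.reverse B.reverse := by
  simp [circ, List.reverse_flatten, reverse_odotPow, Function.comp_def]

lemma dropLast_prefix_circ {f : List ℕ} (hf : IsComposition f) (B : List ℕ) :
    B.dropLast <+: circ f B := by
  obtain ⟨b, f, rfl⟩ := List.exists_cons_of_ne_nil hf.1
  exact (dropLast_prefix_odotPow B (hf.2 b (by simp))).trans (List.prefix_append _ _)

lemma circ_odot {X Y c : List ℕ} (hX : ∀ x ∈ X, 0 < x) (hY : ∀ y ∈ Y, 0 < y) (hc : c ≠ []) :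
    circ (odot X Y) c = odot (circ X c) (circ Y c) := by
  rcases eq_or_ne X [] with rfl | hXn
  · rfl
  cases Y with
  | nil => rw [odot_nil_right, circ_nil, odot_nil_right]
  | cons y Y =>
    have hx := odotPow_ne_nil hc (hX _ (List.getLast_mem hXn))
    have hy := odotPow_ne_nil hc (hY y (by simp))
    conv_rhs => rw [← List.dropLast_append_getLast hXn]
    rw [odot_eq X _ hXn (List.cons_ne_nil y Y), circ_append, circ_append, circ_cons, circ_cons,
      List.head_cons, List.tail_cons, odotPow_add, circ_cons, circ_nil, List.append_nil,
      odot_append_left _ hx, odot_append_right _ hy]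

lemma circ_odotPow {B c : List ℕ} (hB : ∀ x ∈ B, 0 < x) (hc : c ≠ []) (n : ℕ) :
    circ (odotPow B n) c = odotPow (circ B c) n := by
  induction n with
  | zero => rfl
  | succ n ih => rw [odotPow, circ_odot (pos_of_mem_odotPow hB n) hB hc, ih, odotPow]

lemma circ_assoc (a : List ℕ) {b c : List ℕ} (hb : ∀ x ∈ b, 0 < x) (hc : c ≠ []) :
    circ (circ a b) c = circ a (circ b c) := by
  induction a with
  | nil => rfl
  | cons n a ih => rw [circ_cons, circ_append, circ_odotPow hb hc, ih, circ_cons]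

lemma IsComposition.circList {fs : List (List ℕ)} (h : ∀ f ∈ fs, IsComposition f) :
    IsComposition (circList fs) := by
  induction fs with
  | nil => exact show IsComposition [1] from ⟨List.cons_ne_nil 1 [], by simp⟩
  | cons f fs ih => exact (h f (by simp)).circ (ih fun g hg => h g (by simp [hg]))

lemma circList_append {fs gs : List (List ℕ)} (hfs : ∀ f ∈ fs, IsComposition f)
    (hgs : ∀ g ∈ gs, IsComposition g) :
    circList (fs ++ gs) = circ (circList fs) (circList gs) := by
  induction fs with
  | nil => exact (circ_one_left _).symm
  | cons f fs ih =>
    have hfs' : ∀ g ∈ fs, IsComposition g := fun g hg => hfs g (by simp [hg])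
    rw [List.cons_append, circList, circList, ih hfs',
      circ_assoc f (IsComposition.circList hfs').2 (IsComposition.circList hgs).1]

lemma reverse_circList (fs : List (List ℕ)) :
    (circList fs).reverse = circList (fs.map List.reverse) := by
  induction fs with
  | nil => rfl
  | cons f fs ih => rw [circList, reverse_circ, ih, List.map_cons, circList]

lemma odot_append_ne_append {X Y : List ℕ} (hX : X ≠ []) (hY : Y ≠ []) (hY₀ : 0 < Y.head hY)
    (L M : List ℕ) : odot X Y ++ L ≠ X ++ M := by
  intro h
  conv_rhs at h => rw [← List.dropLast_append_getLast hX]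
  rw [odot_eq X Y hX hY] at h
  simp only [List.append_assoc, List.cons_append, List.append_cancel_left_eq,
    List.cons.injEq] at h
  omega

lemma odotPow_append_ne_append {B : List ℕ} (hB : IsComposition B) {b c : ℕ} (hb : 0 < b)
    (hbc : b < c) (L M : List ℕ) : odotPow B c ++ L ≠ odotPow B b ++ M := by
  have hcb : 0 < c - b := Nat.sub_pos_of_lt hbc
  have hY := odotPow_ne_nil hB.1 hcb
  rw [← Nat.add_sub_cancel' hbc.le, odotPow_add]
  exact odot_append_ne_append (odotPow_ne_nil hB.1 hb) hY
    (pos_of_mem_odotPow hB.2 _ _ (List.head_mem hY)) L M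

lemma circ_left_cancel {B : List ℕ} (hB : IsComposition B) :
    ∀ {f g : List ℕ}, (∀ x ∈ f, 0 < x) → (∀ x ∈ g, 0 < x) → circ f B = circ g B → f = g
  | [], [], _, _, _ => rfl
  | [], c :: g, _, hg, h => absurd h.symm (IsComposition.circ ⟨List.cons_ne_nil c g, hg⟩ hB).1
  | b :: f, [], hf, _, h => absurd h (IsComposition.circ ⟨List.cons_ne_nil b f, hf⟩ hB).1
  | b :: f, c :: g, hf, hg, h => by
    have hb := hf b List.mem_cons_self
    have hc := hg c List.mem_cons_self
    rw [circ_cons, circ_cons] at h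
    rcases lt_trichotomy b c with hbc | rfl | hcb
    · exact absurd h.symm (odotPow_append_ne_append hB hb hbc _ _)
    · rw [circ_left_cancel hB (fun x hx => hf x (List.mem_cons_of_mem b hx))
        (fun x hx => hg x (List.mem_cons_of_mem b hx)) (List.append_cancel_left h)]
    · exact absurd h (odotPow_append_ne_append hB hc hcb _ _)

lemma eq_of_dropLast_eq_of_sum_eq {B C : List ℕ} (hB : B ≠ []) (hC : C ≠ [])
    (h : B.dropLast = C.dropLast) (hs : B.sum = C.sum) : B = C := by
  rw [← List.dropLast_append_getLast hB, ← List.dropLast_append_getLast hC] at hs ⊢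
  simp only [List.sum_append, List.sum_singleton, h] at hs
  rw [h, Nat.add_left_cancel hs]

lemma circ_cancel {f g B C : List ℕ} (hf : IsComposition f) (hg : IsComposition g)
    (hB : IsComposition B) (hC : IsComposition C) (hlen : B.length = C.length)
    (hsum : B.sum = C.sum) (h : circ f B = circ g C) : f = g ∧ B = C := by
  have hprefix : B.dropLast = C.dropLast := by
    refine (List.prefix_of_prefix_length_le (dropLast_prefix_circ hf B) ?_ ?_).eq_of_length ?_
    · exact h ▸ dropLast_prefix_circ hg C
    all_goals simp [hlen]
  obtain rfl := eq_of_dropLast_eq_of_sum_eq hB.1 hC.1 hprefix hsum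
  exact ⟨circ_left_cancel hB hf.2 hg.2 h, rfl⟩

lemma forall_eq_one_iff_sum_eq_length {l : List ℕ} (hl : ∀ x ∈ l, 0 < x) :
    (∀ x ∈ l, x = 1) ↔ l.sum = l.length := by
  refine ⟨fun h => by simpa using List.sum_eq_card_nsmul l 1 h, fun h => ?_⟩
  induction l with
  | nil => simp
  | cons a l ih =>
    have ha := hl a List.mem_cons_self
    have hl' : ∀ x ∈ l, 0 < x := fun x hx => hl x (List.mem_cons_of_mem a hx)
    have := List.length_le_sum_of_one_le l hl'
    simp only [List.sum_cons, List.length_cons] at h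
    simp only [List.mem_cons, forall_eq_or_imp]
    exact ⟨by omega, ih hl' (by omega)⟩

lemma IsComposition.length_le_sum {f : List ℕ} (hf : IsComposition f) : f.length ≤ f.sum :=
  List.length_le_sum_of_one_le f hf.2

lemma IsComposition.two_le_sum {f : List ℕ} (hf : IsComposition f) (h1 : f ≠ [1]) :
    2 ≤ f.sum := by
  by_contra! hsum
  have hlen := List.length_pos_iff.2 hf.1
  have hlen₁ : f.length = 1 := by have := hf.length_le_sum; omega
  refine h1 (List.eq_replicate_iff.2 ⟨hlen₁, ?_⟩)
  exact (forall_eq_one_iff_sum_eq_length hf.2).2 (by have := hf.length_le_sum; omega)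

lemma irredComp_singleton (n : ℕ) : IrredComp [n] := by
  intro β γ hβ hγ h
  have hlen := length_circ hβ.2 hγ.1
  rw [← h, List.length_singleton] at hlen
  have := hβ.length_le_sum
  have := List.length_pos_iff.2 hβ.1
  have := List.length_pos_iff.2 hγ.1
  have hγ₁ : γ.length = 1 := by nlinarith
  exact Or.inr (Or.inr (Or.inl ⟨by rw [hγ₁] at hlen; omega, hγ₁⟩))

-- Equality in `ℓ(β ∘ γ) + |β| = |β| ℓ(γ) + ℓ(β) ≤ |β| |γ| + |β|` forces `ℓ = |·|` on both factors.
lemma irredComp_of_forall_eq_one {f : List ℕ} (hf : ∀ x ∈ f, x = 1) : IrredComp f := by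
  intro β γ hβ hγ h
  have hsum : f.sum = f.length := by simpa using List.sum_eq_card_nsmul f 1 hf
  have hlen := length_circ hβ.2 hγ.1
  rw [← h, ← hsum, h, sum_circ] at hlen
  have hβl := hβ.length_le_sum
  have hγl := Nat.mul_le_mul_left β.sum hγ.length_le_sum
  have hβs : 0 < β.sum := Nat.lt_of_lt_of_le (List.length_pos_iff.2 hβ.1) hβl
  have hγs : γ.sum = γ.length :=
    Nat.eq_of_mul_eq_mul_left hβs (by omega)
  exact Or.inr (Or.inr (Or.inr ⟨(forall_eq_one_iff_sum_eq_length hβ.2).2 (by omega),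
    (forall_eq_one_iff_sum_eq_length hγ.2).2 hγs⟩))

lemma IrredComp.circ_of_trivialFact {a b : List ℕ} (ha : IsComposition a) (hb : IsComposition b)
    (ha' : IrredComp a) (hb' : IrredComp b) (h : TrivialFact a b) : IrredComp (circ a b) := by
  have hlen := length_circ ha.2 hb.1
  rcases h with rfl | rfl | ⟨ha₁, hb₁⟩ | ⟨ha₁, hb₁⟩
  · rwa [circ_one_left]
  · rwa [circ_one_right ha.2]
  · obtain ⟨x, hx⟩ := List.length_eq_one_iff.1 (show (circ a b).length = 1 by
      rw [ha₁, hb₁] at hlen; omega)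
    exact hx ▸ irredComp_singleton x
  · refine irredComp_of_forall_eq_one ((forall_eq_one_iff_sum_eq_length (ha.circ hb).2).2 ?_)
    rw [(forall_eq_one_iff_sum_eq_length ha.2).1 ha₁] at hlen
    rw [sum_circ, (forall_eq_one_iff_sum_eq_length ha.2).1 ha₁,
      (forall_eq_one_iff_sum_eq_length hb.2).1 hb₁]
    omega

lemma exists_irredComp_factors {β : List ℕ} (hβ : IsComposition β) :
    ∃ fs : List (List ℕ), fs ≠ [] ∧ (∀ f ∈ fs, IsComposition f ∧ IrredComp f) ∧
      β = circList fs := by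
  induction hs : β.sum using Nat.strong_induction_on generalizing β with
  | _ n ih =>
  by_cases hirr : IrredComp β
  · exact ⟨[β], List.cons_ne_nil β [], by simp [hβ, hirr], (circ_one_right hβ.2).symm⟩
  simp only [IrredComp, not_forall] at hirr
  obtain ⟨γ, δ, hγ, hδ, rfl, hnt⟩ := hirr
  have hγ₂ := hγ.two_le_sum fun h => hnt (Or.inl h)
  have hδ₂ := hδ.two_le_sum fun h => hnt (Or.inr (Or.inl h))
  rw [sum_circ] at hs
  obtain ⟨gs, hgs, hgs', rfl⟩ := ih γ.sum (by nlinarith) hγ rfl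
  obtain ⟨ds, -, hds', rfl⟩ := ih δ.sum (by nlinarith) hδ rfl
  refine ⟨gs ++ ds, by simp [hgs], fun f hf => ?_, ?_⟩
  · rcases List.mem_append.1 hf with hf | hf
    exacts [hgs' f hf, hds' f hf]
  · exact (circList_append (fun f hf => (hgs' f hf).1) (fun f hf => (hds' f hf).1)).symm

lemma exists_shorter_of_not_isChain :
    ∀ {fs : List (List ℕ)}, (∀ f ∈ fs, IsComposition f ∧ IrredComp f) →
      ¬ fs.IsChain (fun a b => ¬ TrivialFact a b) →
      ∃ gs : List (List ℕ), gs ≠ [] ∧ (∀ g ∈ gs, IsComposition g ∧ IrredComp g) ∧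
        circList gs = circList fs ∧ gs.length < fs.length
  | [], _, hchain | [_], _, hchain => absurd (by simp) hchain
  | a :: b :: fs, hirr, hchain => by
    have ha := hirr a (by simp)
    have hb := hirr b (by simp)
    have hfs : ∀ f ∈ fs, IsComposition f ∧ IrredComp f := fun f hf => hirr f (by simp [hf])
    by_cases hab : TrivialFact a b
    · refine ⟨circ a b :: fs, List.cons_ne_nil _ _, ?_, ?_, by simp⟩
      · simp only [List.mem_cons, forall_eq_or_imp]
        exact ⟨⟨ha.1.circ hb.1, IrredComp.circ_of_trivialFact ha.1 hb.1 ha.2 hb.2 hab⟩, hfs⟩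
      · have hR := IsComposition.circList fun f hf => (hfs f hf).1
        simp only [circList, circ_assoc a hb.1.2 hR.1]
    · rw [List.isChain_cons_cons, not_and] at hchain
      obtain ⟨gs, -, hgs, hprod, hlen⟩ := exists_shorter_of_not_isChain
        (fun f hf => hirr f (List.mem_cons_of_mem a hf)) (hchain hab)
      refine ⟨a :: gs, List.cons_ne_nil _ _, ?_, ?_, by simpa using hlen⟩
      · simp only [List.mem_cons, forall_eq_or_imp]
        exact ⟨ha, hgs⟩
      · simp only [circList, hprod]

lemma exists_irredFactorization_circList (fs : List (List ℕ)) (hfs : fs ≠ [])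
    (hirr : ∀ f ∈ fs, IsComposition f ∧ IrredComp f) :
    ∃ gs, IsIrredFactorization (circList fs) gs := by
  induction hn : fs.length using Nat.strong_induction_on generalizing fs with
  | _ n ih =>
  by_cases hchain : fs.IsChain (fun a b => ¬ TrivialFact a b)
  · exact ⟨fs, hfs, hirr, hchain, rfl⟩
  obtain ⟨gs, hgs, hgs', hprod, hlen⟩ := exists_shorter_of_not_isChain hirr hchain
  rw [← hprod]
  exact ih gs.length (hn ▸ hlen) gs hgs hgs' rfl

lemma IsComposition.exists_irredFactorization {β : List ℕ} (hβ : IsComposition β) :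
    ∃ fs, IsIrredFactorization β fs := by
  obtain ⟨fs, hfs, hirr, rfl⟩ := exists_irredComp_factors hβ
  exact exists_irredFactorization_circList fs hfs hirr

lemma IsComposition.reverse {f : List ℕ} (hf : IsComposition f) : IsComposition f.reverse :=
  ⟨List.reverse_ne_nil_iff.2 hf.1, fun x hx => hf.2 x (List.mem_reverse.1 hx)⟩

lemma reverse_eq_of_mem_of_reverse_circList_eq :
    ∀ {fs : List (List ℕ)}, (∀ f ∈ fs, IsComposition f) →
      (circList fs).reverse = circList fs → ∀ f ∈ fs, f.reverse = f
  | [], _, _ => by simp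
  | f :: fs, hcomp, hrev => by
    have hf := hcomp f List.mem_cons_self
    have hfs : ∀ g ∈ fs, IsComposition g := fun g hg => hcomp g (List.mem_cons_of_mem f hg)
    have hR := IsComposition.circList hfs
    rw [circList, reverse_circ] at hrev
    obtain ⟨hf_rev, hR_rev⟩ :=
      circ_cancel hf.reverse hf hR.reverse hR List.length_reverse (List.sum_reverse _) hrev
    simp only [List.mem_cons, forall_eq_or_imp]
    exact ⟨hf_rev, reverse_eq_of_mem_of_reverse_circList_eq hfs hR_rev⟩

/-- A composition is a palindrome iff all factors in its
(unique) irreducible factorization are palindromes. -/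
theorem palindrome_iff_factors_palindrome (β : List ℕ) (hβ : IsComposition β) :
    β.reverse = β ↔
      ∀ fs : List (List ℕ), IsIrredFactorization β fs →
        ∀ f ∈ fs, f.reverse = f := by
  constructor
  · rintro hrev fs ⟨-, hirr, -, rfl⟩
    exact reverse_eq_of_mem_of_reverse_circList_eq (fun f hf => (hirr f hf).1) hrev
  · intro h
    obtain ⟨fs, hfs⟩ := hβ.exists_irredFactorization
    rw [hfs.2.2.2, reverse_circList, List.map_congr_left (h fs hfs), List.map_id']
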